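/- Let (xₙ,tₙ) be a sequence in ℝ × (0,∞) converging to (x,t) with t > 0, let yₙ ∈ S(xₙ,tₙ), and suppose yₙ → y₀ ∈ ℝ. Then y₀ ∈ S(x,t). In particular, for every (x,t) with t > 0 the set S(x,t) is a closed subset of ℝ. -/

import Mathlib

open MeasureTheory Set Filter Topology

noncomputable def Mtot (ρ : Measure ℝ) : ℝ := (ρ Set.univ).toReal

noncomputable def m0 (ρ : Measure ℝ) (y : ℝ) : ℝ := (ρ (Set.Iio y)).toReal

noncomputable def m0p (ρ : Measure ℝ) (y : ℝ) : ℝ := (ρ (Set.Iic y)).toReal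

/-- `m̃₀(y) = (1/2)(ρ((−∞,y)) + ρ((−∞,y]) − M)`. -/
noncomputable def mtilde (ρ : Measure ℝ) (y : ℝ) : ℝ :=
  (m0 ρ y + m0p ρ y - Mtot ρ) / 2

/-- topological support of the measure. -/
def msupp (ρ : Measure ℝ) : Set ℝ := {x | ∀ U ∈ nhds x, 0 < ρ U}

/-- The generalized potential `F(y;x,t)`. -/
noncomputable def Fpot (ρ : Measure ℝ) (u₀ : ℝ → ℝ) (τ y x t : ℝ) : ℝ :=
  ∫ η in Set.Iio y,
    (η + u₀ η * (τ * (1 - Real.exp (-t / τ)))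
       + mtilde ρ η * (τ ^ 2 - τ ^ 2 * Real.exp (-t / τ) - τ * t) - x) ∂ρ

/-- The right-limit value `F(y+;x,t)` (integral over `(−∞,y]`). -/
noncomputable def FpotP (ρ : Measure ℝ) (u₀ : ℝ → ℝ) (τ y x t : ℝ) : ℝ :=
  ∫ η in Set.Iic y,
    (η + u₀ η * (τ * (1 - Real.exp (-t / τ)))
       + mtilde ρ η * (τ ^ 2 - τ ^ 2 * Real.exp (-t / τ) - τ * t) - x) ∂ρ

/-- `ν(x,t) = inf_y F(y;x,t)`. -/
noncomputable def nuEP (ρ : Measure ℝ) (u₀ : ℝ → ℝ) (τ x t : ℝ) : ℝ :=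
  ⨅ y : ℝ, Fpot ρ u₀ τ y x t

/-- `S(x,t)`: points approachable by sequences along which `F` tends to `ν(x,t)`. -/
def Sset (ρ : Measure ℝ) (u₀ : ℝ → ℝ) (τ x t : ℝ) : Set ℝ :=
  {y | ∃ yn : ℕ → ℝ, Tendsto yn atTop (𝓝 y) ∧
    Tendsto (fun n => Fpot ρ u₀ τ (yn n) x t) atTop (𝓝 (nuEP ρ u₀ τ x t))}

/-- `y_*(x,t) = inf (S(x,t) ∩ supp ρ₀)`. -/
noncomputable def ystar (ρ : Measure ℝ) (u₀ : ℝ → ℝ) (τ x t : ℝ) : ℝ :=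
  sInf (Sset ρ u₀ τ x t ∩ msupp ρ)

/-- initial speed `c(y;x,t)` of the characteristic connecting `(y,0)` and `(x,t)`. -/
noncomputable def cspeed (ρ : Measure ℝ) (τ y x t : ℝ) : ℝ :=
  (x - y) / (τ * (1 - Real.exp (-t / τ)))
    - mtilde ρ y * (τ - t / (1 - Real.exp (-t / τ)))


lemma m0_mono (ρ : Measure ℝ) [IsFiniteMeasure ρ] : Monotone (m0 ρ) := fun a b hab =>
  ENNReal.toReal_mono (measure_ne_top ρ _) (measure_mono (Iio_subset_Iio hab))

lemma m0p_mono (ρ : Measure ℝ) [IsFiniteMeasure ρ] : Monotone (m0p ρ) := fun a b hab =>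
  ENNReal.toReal_mono (measure_ne_top ρ _) (measure_mono (Iic_subset_Iic.mpr hab))

lemma measurable_mtilde (ρ : Measure ℝ) [IsFiniteMeasure ρ] : Measurable (mtilde ρ) := by
  unfold mtilde
  exact (((m0_mono ρ).measurable.add (m0p_mono ρ).measurable).sub measurable_const).div_const 2

lemma abs_mtilde_le (ρ : Measure ℝ) [IsFiniteMeasure ρ] (y : ℝ) : |mtilde ρ y| ≤ Mtot ρ := by
  have h0 : (0:ℝ) ≤ m0 ρ y := ENNReal.toReal_nonneg
  have h0p : (0:ℝ) ≤ m0p ρ y := ENNReal.toReal_nonneg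
  have h1 : m0 ρ y ≤ Mtot ρ :=
    ENNReal.toReal_mono (measure_ne_top ρ _) (measure_mono (subset_univ _))
  have h2 : m0p ρ y ≤ Mtot ρ :=
    ENNReal.toReal_mono (measure_ne_top ρ _) (measure_mono (subset_univ _))
  unfold mtilde
  rw [abs_le]
  constructor <;> linarith

lemma integrable_u0 (ρ : Measure ℝ) [IsFiniteMeasure ρ] {u₀ : ℝ → ℝ} {U₀ : ℝ}
    (humeas : Measurable u₀) (hu : ∀ᵐ η ∂ρ, |u₀ η| ≤ U₀) : Integrable u₀ ρ := by
  refine Integrable.mono' (integrable_const |U₀|) humeas.aestronglyMeasurable ?_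
  filter_upwards [hu] with η h
  rw [Real.norm_eq_abs]
  exact h.trans (le_abs_self _)

lemma integrable_mtilde (ρ : Measure ℝ) [IsFiniteMeasure ρ] : Integrable (mtilde ρ) ρ := by
  refine Integrable.mono' (integrable_const (Mtot ρ)) (measurable_mtilde ρ).aestronglyMeasurable ?_
  exact Eventually.of_forall fun y => by rw [Real.norm_eq_abs]; exact abs_mtilde_le ρ y

lemma integrable_integrand (ρ : Measure ℝ) [IsFiniteMeasure ρ] {u₀ : ℝ → ℝ} {U₀ : ℝ}
    (hmom : Integrable (fun η : ℝ => η) ρ) (humeas : Measurable u₀)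
    (hu : ∀ᵐ η ∂ρ, |u₀ η| ≤ U₀) (a b c : ℝ) :
    Integrable (fun η => η + u₀ η * a + mtilde ρ η * b - c) ρ :=
  ((hmom.add ((integrable_u0 ρ humeas hu).mul_const a)).add
    ((integrable_mtilde ρ).mul_const b)).sub (integrable_const c)

/-- uniform-in-y modulus of continuity in the parameters -/
noncomputable def Phi (M U₀ τ x t x' t' : ℝ) : ℝ :=
  (|U₀| * |τ * (1 - Real.exp (-t / τ)) - τ * (1 - Real.exp (-t' / τ))|
    + M * |(τ ^ 2 - τ ^ 2 * Real.exp (-t / τ) - τ * t)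
            - (τ ^ 2 - τ ^ 2 * Real.exp (-t' / τ) - τ * t')|
    + |x - x'|) * M

lemma Phi_comm (M U₀ τ x t x' t' : ℝ) : Phi M U₀ τ x t x' t' = Phi M U₀ τ x' t' x t := by
  unfold Phi
  rw [abs_sub_comm, abs_sub_comm (τ ^ 2 - τ ^ 2 * Real.exp (-t / τ) - τ * t),
    abs_sub_comm x x']

lemma Phi_self (M U₀ τ x t : ℝ) : Phi M U₀ τ x t x t = 0 := by simp [Phi]

lemma Fpot_diff_le (ρ : Measure ℝ) [IsFiniteMeasure ρ] {u₀ : ℝ → ℝ} {U₀ : ℝ} (τ : ℝ)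
    (hmom : Integrable (fun η : ℝ => η) ρ) (humeas : Measurable u₀)
    (hu : ∀ᵐ η ∂ρ, |u₀ η| ≤ U₀) (y x t x' t' : ℝ) :
    |Fpot ρ u₀ τ y x t - Fpot ρ u₀ τ y x' t'| ≤ Phi (Mtot ρ) U₀ τ x t x' t' := by
  set d1 : ℝ := τ * (1 - Real.exp (-t / τ)) - τ * (1 - Real.exp (-t' / τ)) with hd1
  set d2 : ℝ := (τ ^ 2 - τ ^ 2 * Real.exp (-t / τ) - τ * t)
      - (τ ^ 2 - τ ^ 2 * Real.exp (-t' / τ) - τ * t') with hd2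
  set C : ℝ := |U₀| * |d1| + Mtot ρ * |d2| + |x - x'| with hC
  have hM0 : (0:ℝ) ≤ Mtot ρ := ENNReal.toReal_nonneg
  have hC0 : 0 ≤ C := by positivity
  have hint : Integrable (fun η => u₀ η * d1 + mtilde ρ η * d2 - (x - x')) ρ :=
    (((integrable_u0 ρ humeas hu).mul_const d1).add
      ((integrable_mtilde ρ).mul_const d2)).sub (integrable_const (x - x'))
  have heq : Fpot ρ u₀ τ y x t - Fpot ρ u₀ τ y x' t'
      = ∫ η in Set.Iio y, (u₀ η * d1 + mtilde ρ η * d2 - (x - x')) ∂ρ := by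
    unfold Fpot
    rw [← integral_sub ((integrable_integrand ρ hmom humeas hu _ _ x).restrict)
      ((integrable_integrand ρ hmom humeas hu _ _ x').restrict)]
    refine integral_congr_ae (Eventually.of_forall fun η => ?_)
    simp only [hd1, hd2]
    ring
  rw [heq]
  have hae : ∀ᵐ η ∂(ρ.restrict (Set.Iio y)),
      ‖u₀ η * d1 + mtilde ρ η * d2 - (x - x')‖ ≤ C := by
    filter_upwards [ae_restrict_of_ae hu] with η h
    rw [Real.norm_eq_abs]
    have h1 : |u₀ η * d1| ≤ |U₀| * |d1| := by
      rw [abs_mul]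
      exact mul_le_mul_of_nonneg_right (h.trans (le_abs_self _)) (abs_nonneg _)
    have h2 : |mtilde ρ η * d2| ≤ Mtot ρ * |d2| := by
      rw [abs_mul]
      exact mul_le_mul_of_nonneg_right (abs_mtilde_le ρ η) (abs_nonneg _)
    have t1 := abs_add_le (u₀ η * d1 + mtilde ρ η * d2) (-(x - x'))
    have t2 := abs_add_le (u₀ η * d1) (mtilde ρ η * d2)
    rw [abs_neg] at t1
    have h3 : u₀ η * d1 + mtilde ρ η * d2 - (x - x')
        = (u₀ η * d1 + mtilde ρ η * d2) + (-(x - x')) := by ring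
    rw [h3, hC]
    linarith
  have hb := norm_integral_le_of_norm_le_const (μ := ρ.restrict (Set.Iio y)) hae
  rw [Real.norm_eq_abs] at hb
  refine hb.trans ?_
  have : ((ρ.restrict (Set.Iio y)) Set.univ).toReal ≤ Mtot ρ := by
    rw [Measure.restrict_apply_univ]
    exact ENNReal.toReal_mono (measure_ne_top ρ _) (measure_mono (subset_univ _))
  calc C * ((ρ.restrict (Set.Iio y)) Set.univ).toReal ≤ C * Mtot ρ :=
        mul_le_mul_of_nonneg_left this hC0
    _ = Phi (Mtot ρ) U₀ τ x t x' t' := rfl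

lemma Fpot_bddBelow (ρ : Measure ℝ) [IsFiniteMeasure ρ] {u₀ : ℝ → ℝ} {U₀ : ℝ} (τ : ℝ)
    (hmom : Integrable (fun η : ℝ => η) ρ) (humeas : Measurable u₀)
    (hu : ∀ᵐ η ∂ρ, |u₀ η| ≤ U₀) (x t : ℝ) :
    BddBelow (Set.range fun y => Fpot ρ u₀ τ y x t) := by
  set G : ℝ → ℝ := fun η => η + u₀ η * (τ * (1 - Real.exp (-t / τ)))
       + mtilde ρ η * (τ ^ 2 - τ ^ 2 * Real.exp (-t / τ) - τ * t) - x with hG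
  have hGint : Integrable G ρ := integrable_integrand ρ hmom humeas hu _ _ x
  refine ⟨-(∫ η, ‖G η‖ ∂ρ), ?_⟩
  rintro v ⟨y, rfl⟩
  have h1 : ‖Fpot ρ u₀ τ y x t‖ ≤ ∫ η in Set.Iio y, ‖G η‖ ∂ρ :=
    norm_integral_le_integral_norm _
  have h2 : ∫ η in Set.Iio y, ‖G η‖ ∂ρ ≤ ∫ η, ‖G η‖ ∂ρ :=
    setIntegral_le_integral hGint.norm (Eventually.of_forall fun η => norm_nonneg _)
  have := (neg_abs_le (Fpot ρ u₀ τ y x t))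
  rw [← Real.norm_eq_abs] at this
  linarith

lemma nu_diff_le (ρ : Measure ℝ) [IsFiniteMeasure ρ] {u₀ : ℝ → ℝ} {U₀ : ℝ} (τ : ℝ)
    (hmom : Integrable (fun η : ℝ => η) ρ) (humeas : Measurable u₀)
    (hu : ∀ᵐ η ∂ρ, |u₀ η| ≤ U₀) (x t x' t' : ℝ) :
    |nuEP ρ u₀ τ x t - nuEP ρ u₀ τ x' t'| ≤ Phi (Mtot ρ) U₀ τ x t x' t' := by
  have key : ∀ a b a' b', nuEP ρ u₀ τ a b - nuEP ρ u₀ τ a' b' ≤ Phi (Mtot ρ) U₀ τ a b a' b' := by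
    intro a b a' b'
    rw [sub_le_iff_le_add]
    have : nuEP ρ u₀ τ a b - Phi (Mtot ρ) U₀ τ a b a' b' ≤ nuEP ρ u₀ τ a' b' := by
      refine le_ciInf fun y => ?_
      have h1 : nuEP ρ u₀ τ a b ≤ Fpot ρ u₀ τ y a b :=
        ciInf_le (Fpot_bddBelow ρ τ hmom humeas hu a b) y
      have h2 := Fpot_diff_le ρ τ hmom humeas hu y a b a' b'
      rw [abs_le] at h2
      linarith [h2.1]
    linarith
  rw [abs_le]
  constructor
  · have := key x' t' x t
    rw [Phi_comm] at this
    linarith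
  · exact key x t x' t'

lemma Sset_approx {ρ : Measure ℝ} {u₀ : ℝ → ℝ} {τ a b : ℝ} {w : ℝ}
    (hw : w ∈ Sset ρ u₀ τ a b) {ε : ℝ} (hε : 0 < ε) :
    ∃ z : ℝ, |z - w| < ε ∧ |Fpot ρ u₀ τ z a b - nuEP ρ u₀ τ a b| < ε := by
  obtain ⟨s, hs1, hs2⟩ := hw
  obtain ⟨N1, hN1⟩ := Metric.tendsto_atTop.mp hs1 ε hε
  obtain ⟨N2, hN2⟩ := Metric.tendsto_atTop.mp hs2 ε hε
  refine ⟨s (max N1 N2), ?_, ?_⟩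
  · have := hN1 (max N1 N2) (le_max_left _ _)
    rwa [Real.dist_eq] at this
  · have := hN2 (max N1 N2) (le_max_right _ _)
    rwa [Real.dist_eq] at this

lemma one_div_tendsto : Tendsto (fun n : ℕ => 1 / ((n : ℝ) + 1)) atTop (𝓝 0) :=
  tendsto_one_div_add_atTop_nhds_zero_nat

lemma Sset_isClosed (ρ : Measure ℝ) (u₀ : ℝ → ℝ) (τ x' t' : ℝ) :
    IsClosed (Sset ρ u₀ τ x' t') := by
  apply IsSeqClosed.isClosed
  intro u p hmem hlim
  have hch : ∀ n : ℕ, ∃ z : ℝ, |z - u n| < 1 / ((n : ℝ) + 1) ∧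
      |Fpot ρ u₀ τ z x' t' - nuEP ρ u₀ τ x' t'| < 1 / ((n : ℝ) + 1) :=
    fun n => Sset_approx (hmem n) (by positivity)
  choose z hz1 hz2 using hch
  refine ⟨z, ?_, ?_⟩
  · rw [tendsto_iff_dist_tendsto_zero]
    simp only [Real.dist_eq]
    have hup : Tendsto (fun n => |u n - p|) atTop (𝓝 0) := by
      have := tendsto_iff_dist_tendsto_zero.mp hlim
      simpa [Real.dist_eq] using this
    refine squeeze_zero (g := fun n : ℕ => 1 / ((n : ℝ) + 1) + |u n - p|)
      (fun n => abs_nonneg _) (fun n => ?_) ?_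
    · exact (abs_sub_le (z n) (u n) p).trans (by linarith [le_of_lt (hz1 n)])
    · simpa using one_div_tendsto.add hup
  · rw [tendsto_iff_dist_tendsto_zero]
    simp only [Real.dist_eq]
    refine squeeze_zero (fun n => abs_nonneg _) (fun n => le_of_lt (hz2 n)) one_div_tendsto

lemma Phi_tendsto (M U₀ τ x t : ℝ) (xn tn : ℕ → ℝ)
    (hxn : Tendsto xn atTop (𝓝 x)) (htn' : Tendsto tn atTop (𝓝 t)) :
    Tendsto (fun n => Phi M U₀ τ x t (xn n) (tn n)) atTop (𝓝 0) := by
  have key : Tendsto (fun n => (xn n, tn n)) atTop (𝓝 (x, t)) := hxn.prodMk_nhds htn'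
  have hc : Continuous (fun p : ℝ × ℝ => Phi M U₀ τ x t p.1 p.2) := by
    unfold Phi
    fun_prop
  have := (hc.tendsto (x, t)).comp key
  simpa [Phi_self, Function.comp_def] using this

theorem stmt5 (ρ : Measure ℝ) [IsFiniteMeasure ρ] (u₀ : ℝ → ℝ) (U₀ τ : ℝ)
    (hτ : 0 < τ)
    (hmom : Integrable (fun η : ℝ => η) ρ) (humeas : Measurable u₀)
    (hu : ∀ᵐ η ∂ρ, |u₀ η| ≤ U₀)
    (x t : ℝ) (ht : 0 < t)
    (xn tn : ℕ → ℝ) (htn : ∀ n, 0 < tn n)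
    (hxn : Tendsto xn atTop (𝓝 x)) (htn' : Tendsto tn atTop (𝓝 t))
    (yn : ℕ → ℝ) (hyn : ∀ n, yn n ∈ Sset ρ u₀ τ (xn n) (tn n))
    (y₀ : ℝ) (hy : Tendsto yn atTop (𝓝 y₀)) :
    y₀ ∈ Sset ρ u₀ τ x t ∧ ∀ x' t' : ℝ, 0 < t' → IsClosed (Sset ρ u₀ τ x' t') := by
  refine ⟨?_, fun x' t' _ => Sset_isClosed ρ u₀ τ x' t'⟩
  have hch : ∀ n : ℕ, ∃ z : ℝ, |z - yn n| < 1 / ((n : ℝ) + 1) ∧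
      |Fpot ρ u₀ τ z (xn n) (tn n) - nuEP ρ u₀ τ (xn n) (tn n)| < 1 / ((n : ℝ) + 1) :=
    fun n => Sset_approx (hyn n) (by positivity)
  choose z hz1 hz2 using hch
  have hPhi : Tendsto (fun n => Phi (Mtot ρ) U₀ τ x t (xn n) (tn n)) atTop (𝓝 0) :=
    Phi_tendsto (Mtot ρ) U₀ τ x t xn tn hxn htn'
  refine ⟨z, ?_, ?_⟩
  · rw [tendsto_iff_dist_tendsto_zero]
    simp only [Real.dist_eq]
    have hup : Tendsto (fun n => |yn n - y₀|) atTop (𝓝 0) := by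
      have := tendsto_iff_dist_tendsto_zero.mp hy
      simpa [Real.dist_eq] using this
    refine squeeze_zero (g := fun n : ℕ => 1 / ((n : ℝ) + 1) + |yn n - y₀|)
      (fun n => abs_nonneg _) (fun n => ?_) ?_
    · exact (abs_sub_le (z n) (yn n) y₀).trans (by linarith [le_of_lt (hz1 n)])
    · simpa using one_div_tendsto.add hup
  · rw [tendsto_iff_dist_tendsto_zero]
    simp only [Real.dist_eq]
    refine squeeze_zero
      (g := fun n : ℕ => Phi (Mtot ρ) U₀ τ x t (xn n) (tn n)
        + 1 / ((n : ℝ) + 1) + Phi (Mtot ρ) U₀ τ x t (xn n) (tn n))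
      (fun n => abs_nonneg _) (fun n => ?_) ?_
    · have h1 := Fpot_diff_le ρ τ hmom humeas hu (z n) x t (xn n) (tn n)
      have h2 := le_of_lt (hz2 n)
      have h3 := nu_diff_le ρ τ hmom humeas hu x t (xn n) (tn n)
      have tri : |Fpot ρ u₀ τ (z n) x t - nuEP ρ u₀ τ x t|
          ≤ |Fpot ρ u₀ τ (z n) x t - Fpot ρ u₀ τ (z n) (xn n) (tn n)|
            + |Fpot ρ u₀ τ (z n) (xn n) (tn n) - nuEP ρ u₀ τ (xn n) (tn n)|
            + |nuEP ρ u₀ τ (xn n) (tn n) - nuEP ρ u₀ τ x t| := by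
        have := abs_sub_le (Fpot ρ u₀ τ (z n) x t) (Fpot ρ u₀ τ (z n) (xn n) (tn n))
          (nuEP ρ u₀ τ x t)
        have := abs_sub_le (Fpot ρ u₀ τ (z n) (xn n) (tn n)) (nuEP ρ u₀ τ (xn n) (tn n))
          (nuEP ρ u₀ τ x t)
        linarith [abs_sub_le (Fpot ρ u₀ τ (z n) x t) (Fpot ρ u₀ τ (z n) (xn n) (tn n))
          (nuEP ρ u₀ τ x t),
          abs_sub_le (Fpot ρ u₀ τ (z n) (xn n) (tn n)) (nuEP ρ u₀ τ (xn n) (tn n))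
          (nuEP ρ u₀ τ x t)]
      have h3' : |nuEP ρ u₀ τ (xn n) (tn n) - nuEP ρ u₀ τ x t|
          ≤ Phi (Mtot ρ) U₀ τ x t (xn n) (tn n) := by
        rwa [abs_sub_comm]
      linarith
    · have : Tendsto (fun n : ℕ => Phi (Mtot ρ) U₀ τ x t (xn n) (tn n)
          + 1 / ((n : ℝ) + 1) + Phi (Mtot ρ) U₀ τ x t (xn n) (tn n)) atTop (𝓝 (0 + 0 + 0)) :=
        (hPhi.add one_div_tendsto).add hPhi
      simpa using this
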